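/- Let n, k be natural numbers with 1 ≤ k ≤ n and n+1 ≤ 2k. Let a_0,...,a_{n−k}, b_0,...,b_n, c_0,...,c_{n−k} be complex numbers satisfying b_j ≠ 0 for every j with n+1−k ≤ j ≤ k−1 and b_j·b_{j+k} − a_j·c_j ≠ 0 for every j with 0 ≤ j ≤ n−k, and let A be the (n+1)×(n+1) k-tridiagonal matrix with A_{j+k,j} = a_j and A_{j,j+k} = c_j for j = 0,...,n−k, A_{jj} = b_j for j = 0,...,n, and all other entries zero. Then A is invertible and its inverse X = A⁻¹ is the k-tridiagonal matrix with entries: X_{j+k,j} = −a_j/(b_j·b_{j+k} − a_j·c_j) for j = 0,...,n−k; X_{j,j+k} = −c_j/(b_j·b_{j+k} − a_j·c_j) for j = 0,...,n−k; X_{jj} = b_{j+k}/(b_j·b_{j+k} − a_j·c_j) for j = 0,...,n−k; X_{jj} = 1/b_j for j = n+1−k,...,k−1; X_{jj} = b_{j−k}/(b_{j−k}·b_j − a_{j−k}·c_{j−k}) for j = k,...,n; and X_{ij} = 0 whenever |i−j| ∉ {0, k}. -/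

import Mathlib

/-! Since `n + 1 ≤ 2 * k`, each index `i` is joined by the `k`-band to at most one other index,
`i + k` or `i - k`. Up to a simultaneous permutation of rows and columns, `A` is therefore a direct
sum of `2 × 2` blocks `[[b j, c j], [a j, b (j + k)]]` and `1 × 1` blocks `b j`, and its inverse is
the direct sum of the block inverses given by the adjugate formula. Rather than permuting, we work
with matrices supported on the diagonal and the graph of an involution `σ`, which multiply
blockwise like `2 × 2` matrices. -/

open Function

namespace Matrix

variable {ι R : Type*} [DecidableEq ι]

def pairBlockMatrix [Zero R] (σ : ι → ι) (d e : ι → R) : Matrix ι ι R :=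
  of fun i j => if j = i then d i else if j = σ i then e i else 0

theorem pairBlockMatrix_one_zero [CommRing R] (σ : ι → ι) :
    pairBlockMatrix σ (1 : ι → R) 0 = 1 := by
  ext i j
  simp only [pairBlockMatrix, of_apply, one_apply, Pi.one_apply, Pi.zero_apply, eq_comm (a := j)]
  split_ifs <;> rfl

variable [Fintype ι] {σ : ι → ι}

theorem pairBlockMatrix_mul [CommRing R] (hσ : Involutive σ) {d e d' e' : ι → R}
    (he : ∀ i, σ i = i → e i = 0) :
    pairBlockMatrix σ d e * pairBlockMatrix σ d' e' =
      pairBlockMatrix σ (fun i => d i * d' i + e i * e' (σ i))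
        (fun i => d i * e' i + e i * d' (σ i)) := by
  ext i j
  rw [mul_apply]
  by_cases hi : σ i = i
  · rw [Fintype.sum_eq_single i fun l hl => by simp [pairBlockMatrix, hl, hi]]
    simp only [pairBlockMatrix, of_apply, hi, he i hi]
    split_ifs <;> simp
  · rw [Fintype.sum_eq_add i (σ i) (Ne.symm hi) fun l hl => by
      simp [pairBlockMatrix, hl.1, hl.2]]
    simp only [pairBlockMatrix, of_apply, hσ i, if_true, if_neg hi, if_neg (Ne.symm hi)]
    split_ifs <;> simp_all

def pairBlockDet [CommRing R] (σ : ι → ι) (d e : ι → R) (i : ι) : R :=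
  d i * d (σ i) - e i * e (σ i)

theorem pairBlockMatrix_mul_inverse [Field R] (hσ : Involutive σ) {d e : ι → R}
    (he : ∀ i, σ i = i → e i = 0) (hdet : ∀ i, pairBlockDet σ d e i ≠ 0) :
    pairBlockMatrix σ d e *
        pairBlockMatrix σ (fun i => d (σ i) / pairBlockDet σ d e i)
          (fun i => -e i / pairBlockDet σ d e i) = 1 := by
  have hsymm : ∀ i, pairBlockDet σ d e (σ i) = pairBlockDet σ d e i := fun i => by
    simp only [pairBlockDet, hσ i]; ring
  rw [pairBlockMatrix_mul hσ he, ← pairBlockMatrix_one_zero σ]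
  congr 1 <;> funext i <;> simp only [hσ i, hsymm, Pi.one_apply, Pi.zero_apply] <;>
    field_simp [hdet i]
  · rw [pairBlockDet]; ring
  · ring

end Matrix

open Matrix

section KTridiagonal

variable {n k : ℕ}

def kPartner (n k : ℕ) (i : Fin (n + 1)) : Fin (n + 1) :=
  ⟨if (i : ℕ) + k ≤ n then i + k else if k ≤ (i : ℕ) then i - k else i, by split_ifs <;> omega⟩

theorem kPartner_involutive (h2k : n + 1 ≤ 2 * k) : Involutive (kPartner n k) := by
  intro i
  ext
  simp only [kPartner]
  split_ifs <;> omega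

variable {R : Type*} [Zero R]

def kCoupling (n k : ℕ) (a c : ℕ → R) (i : Fin (n + 1)) : R :=
  if (i : ℕ) + k ≤ n then c i else if k ≤ (i : ℕ) then a (i - k) else 0

theorem kCoupling_eq_zero_of_kPartner_eq (hk : 0 < k) (a c : ℕ → R) {i : Fin (n + 1)}
    (hi : kPartner n k i = i) : kCoupling n k a c i = 0 := by
  have := congrArg Fin.val hi
  simp only [kPartner] at this
  simp only [kCoupling]
  split_ifs at this ⊢ <;> first | rfl | omega

def kTridiagonal (n k : ℕ) (a b c : ℕ → R) : Matrix (Fin (n + 1)) (Fin (n + 1)) R :=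
  of fun i j : Fin (n + 1) =>
      if (i : ℕ) = (j : ℕ) then b i
      else if (i : ℕ) = (j : ℕ) + k then a j
      else if (j : ℕ) = (i : ℕ) + k then c i
      else 0

theorem kTridiagonal_eq_pairBlockMatrix (h2k : n + 1 ≤ 2 * k) (a b c : ℕ → R) :
    kTridiagonal n k a b c =
      pairBlockMatrix (kPartner n k) (fun i => b i) (kCoupling n k a c) := by
  ext i j
  simp only [kTridiagonal, pairBlockMatrix, kPartner, kCoupling, of_apply, Fin.ext_iff]
  split_ifs <;> first | rfl | omega | congr 1

end KTridiagonal

section KTridiagonalField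

variable {n k : ℕ} {K : Type*} [Field K] {a b c : ℕ → K}

theorem pairBlockDet_kPartner (h2k : n + 1 ≤ 2 * k) (i : Fin (n + 1)) :
    pairBlockDet (kPartner n k) (fun i => b i) (kCoupling n k a c) i =
      if (i : ℕ) + k ≤ n then b i * b (i + k) - a i * c i
      else if k ≤ (i : ℕ) then b (i - k) * b i - a (i - k) * c (i - k)
      else b i * b i := by
  simp only [pairBlockDet, kPartner, kCoupling]
  split_ifs <;> (try simp only [Nat.add_sub_cancel, mul_zero, sub_zero]) <;> first | omega | ring

theorem pairBlockDet_kPartner_ne_zero (h2k : n + 1 ≤ 2 * k)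
    (hb : ∀ j : ℕ, n + 1 - k ≤ j → j ≤ k - 1 → b j ≠ 0)
    (habc : ∀ j : ℕ, j ≤ n - k → b j * b (j + k) - a j * c j ≠ 0) (i : Fin (n + 1)) :
    pairBlockDet (kPartner n k) (fun i => b i) (kCoupling n k a c) i ≠ 0 := by
  rw [pairBlockDet_kPartner h2k]
  split_ifs with h₁ h₂
  · exact habc i (by omega)
  · simpa [Nat.sub_add_cancel h₂] using habc (i - k) (by omega)
  · exact mul_ne_zero (hb i (by omega) (by omega)) (hb i (by omega) (by omega))

def kTridiagonalInv (n k : ℕ) (a b c : ℕ → K) : Matrix (Fin (n + 1)) (Fin (n + 1)) K :=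
  of fun i j : Fin (n + 1) =>
      if (i : ℕ) = (j : ℕ) then
        (if (i : ℕ) + k ≤ n then b ((i : ℕ) + k) / (b i * b ((i : ℕ) + k) - a i * c i)
         else if k ≤ (i : ℕ) then
           b ((i : ℕ) - k) / (b ((i : ℕ) - k) * b i - a ((i : ℕ) - k) * c ((i : ℕ) - k))
         else 1 / b i)
      else if (i : ℕ) = (j : ℕ) + k then
        -a j / (b j * b ((j : ℕ) + k) - a j * c j)
      else if (j : ℕ) = (i : ℕ) + k then
        -c i / (b i * b ((i : ℕ) + k) - a i * c i)
      else 0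

theorem kTridiagonalInv_eq_pairBlockMatrix (h2k : n + 1 ≤ 2 * k) :
    kTridiagonalInv n k a b c = pairBlockMatrix (kPartner n k)
      (fun i => b (kPartner n k i) /
        pairBlockDet (kPartner n k) (fun i => b i) (kCoupling n k a c) i)
      (fun i => -kCoupling n k a c i /
        pairBlockDet (kPartner n k) (fun i => b i) (kCoupling n k a c) i) := by
  ext ⟨i, hi⟩ ⟨j, hj⟩
  simp only [pairBlockMatrix, of_apply, pairBlockDet_kPartner h2k]
  simp only [kTridiagonalInv, kPartner, kCoupling, of_apply, Fin.ext_iff]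
  split_ifs <;> (try subst_vars) <;> (try simp only [Nat.add_sub_cancel]) <;>
    first | rfl | omega | rw [one_div, div_self_mul_self']

theorem kTridiagonal_mul_kTridiagonalInv (h2k : n + 1 ≤ 2 * k)
    (hb : ∀ j : ℕ, n + 1 - k ≤ j → j ≤ k - 1 → b j ≠ 0)
    (habc : ∀ j : ℕ, j ≤ n - k → b j * b (j + k) - a j * c j ≠ 0) :
    kTridiagonal n k a b c * kTridiagonalInv n k a b c = 1 := by
  rw [kTridiagonal_eq_pairBlockMatrix h2k, kTridiagonalInv_eq_pairBlockMatrix h2k]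
  exact pairBlockMatrix_mul_inverse (kPartner_involutive h2k)
    (fun _ => kCoupling_eq_zero_of_kPartner_eq (by omega) a c)
    (pairBlockDet_kPartner_ne_zero h2k hb habc)

end KTridiagonalField

theorem stmt8_general (n k : ℕ) (h2k : n + 1 ≤ 2 * k)
    (a b c : ℕ → ℂ)
    (hb : ∀ j : ℕ, n + 1 - k ≤ j → j ≤ k - 1 → b j ≠ 0)
    (habc : ∀ j : ℕ, j ≤ n - k → b j * b (j + k) - a j * c j ≠ 0)
    (A : Matrix (Fin (n+1)) (Fin (n+1)) ℂ)
    (hA : A = Matrix.of fun i j : Fin (n+1) =>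
      if (i : ℕ) = (j : ℕ) then b i
      else if (i : ℕ) = (j : ℕ) + k then a j
      else if (j : ℕ) = (i : ℕ) + k then c i
      else 0) :
    IsUnit A ∧
    A⁻¹ = Matrix.of fun i j : Fin (n+1) =>
      if (i : ℕ) = (j : ℕ) then
        (if (i : ℕ) + k ≤ n then b ((i : ℕ) + k) / (b i * b ((i : ℕ) + k) - a i * c i)
         else if k ≤ (i : ℕ) then
           b ((i : ℕ) - k) / (b ((i : ℕ) - k) * b i - a ((i : ℕ) - k) * c ((i : ℕ) - k))
         else 1 / b i)
      else if (i : ℕ) = (j : ℕ) + k then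
        -a j / (b j * b ((j : ℕ) + k) - a j * c j)
      else if (j : ℕ) = (i : ℕ) + k then
        -c i / (b i * b ((i : ℕ) + k) - a i * c i)
      else 0 := by
  have hmul : A * kTridiagonalInv n k a b c = 1 := by
    subst hA
    exact kTridiagonal_mul_kTridiagonalInv h2k hb habc
  exact ⟨.of_mul_eq_one _ hmul, inv_eq_right_inv hmul⟩

theorem stmt8 (n k : ℕ) (hk : 1 ≤ k) (hkn : k ≤ n) (h2k : n + 1 ≤ 2 * k)
    (a b c : ℕ → ℂ)
    (hb : ∀ j : ℕ, n + 1 - k ≤ j → j ≤ k - 1 → b j ≠ 0)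
    (habc : ∀ j : ℕ, j ≤ n - k → b j * b (j + k) - a j * c j ≠ 0)
    (A : Matrix (Fin (n+1)) (Fin (n+1)) ℂ)
    (hA : A = Matrix.of fun i j : Fin (n+1) =>
      if (i : ℕ) = (j : ℕ) then b i
      else if (i : ℕ) = (j : ℕ) + k then a j
      else if (j : ℕ) = (i : ℕ) + k then c i
      else 0) :
    IsUnit A ∧
    A⁻¹ = Matrix.of fun i j : Fin (n+1) =>
      if (i : ℕ) = (j : ℕ) then
        (if (i : ℕ) + k ≤ n then b ((i : ℕ) + k) / (b i * b ((i : ℕ) + k) - a i * c i)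
         else if k ≤ (i : ℕ) then
           b ((i : ℕ) - k) / (b ((i : ℕ) - k) * b i - a ((i : ℕ) - k) * c ((i : ℕ) - k))
         else 1 / b i)
      else if (i : ℕ) = (j : ℕ) + k then
        -a j / (b j * b ((j : ℕ) + k) - a j * c j)
      else if (j : ℕ) = (i : ℕ) + k then
        -c i / (b i * b ((i : ℕ) + k) - a i * c i)
      else 0 :=
  stmt8_general n k h2k a b c hb habc A hA
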